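/- arXiv:2511.11398 — 2 statements merged into one kernel-verified Lean document; each statement's English description precedes it below -/
import Mathlib

section
/- Fix κ ≥ 1, λ ∈ ℂ, r = (r_1,…,r_κ) ∈ ℂ^κ, K ≥ 0, and a complex polynomial L(ζ) such that L(λ+⟨k,r⟩) ≠ 0 for every k ∈ ℤ₊^κ∖{0}, where ⟨k,r⟩ = k_1 r_1+…+k_κ r_κ and |k| = k_1+…+k_κ. Let c : ℤ₊^κ∖{0} → ℂ[t] be a family of polynomials such that for every m ∈ ℤ₊^κ∖{0}, the polynomial L(λ+⟨m,r⟩ + d/dt) c_m (i.e. Σ_j A_j Δ_m^j c_m where Δ_m v = (λ+⟨m,r⟩)v + v' and L(ζ) = Σ_j A_j ζ^j) equals a finite sum of terms, each of the form β(t)·Π_{i=1}^{p} (Δ_{k_i})^{j_i} c_{k_i} with p ≥ 0, j_i ∈ ℕ, β ∈ ℂ[t], multi-indices k_1,…,k_p ∈ ℤ₊^κ∖{0} satisfying k_1+…+k_p ≤ m componentwise and |k_1|+…+|k_p| < |m|, and deg β ≤ K·(|m| − |k_1| − … − |k_p|). Then deg c_m ≤ K·|m| for every m ∈ ℤ₊^κ∖{0}.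 -/
/-!
Since `d/dt` lowers degree, the coefficient of `t ^ deg v` in `L(λ+⟨m,r⟩+d/dt) v` is
`L(λ+⟨m,r⟩)` times the leading coefficient of `v`; as this factor is nonzero, `deg c_m` is at
most the degree of the right-hand side of the recursion. By strong induction on `|m|`, each term
`β · Π Δ_{k_i}^{j_i} c_{k_i}` there has degree at most `K(|m| − Σ|k_i|) + Σ K|k_i| = K|m|`,
because `Δ_k` does not raise degree.
-/

/-- `|m| = m_1 + … + m_κ` for a multi-index `m`. -/
def msize {κ : ℕ} (m : Fin κ → ℕ) : ℕ := ∑ i, m i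

/-- `⟨m,r⟩ = m_1 r_1 + … + m_κ r_κ`. -/
noncomputable def mdot {κ : ℕ} (r : Fin κ → ℂ) (m : Fin κ → ℕ) : ℂ := ∑ i, (m i : ℂ) * r i

/-- The operator `Δ_k v = (λ+⟨k,r⟩)·v + dv/dt` on `ℂ[t]`. -/
noncomputable def DeltaOp {κ : ℕ} (lam : ℂ) (r : Fin κ → ℂ) (k : Fin κ → ℕ)
    (v : Polynomial ℂ) : Polynomial ℂ :=
  Polynomial.C (lam + mdot r k) * v + Polynomial.derivative v

open Polynomial

section PolynomialDegree

variable {R : Type*} [Semiring R]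

lemma natDegree_C_mul_add_derivative_le (a : R) (v : R[X]) :
    (C a * v + derivative v).natDegree ≤ v.natDegree :=
  (natDegree_add_le _ _).trans <|
    max_le (natDegree_C_mul_le a v) ((natDegree_derivative_le v).trans tsub_le_self)

lemma coeff_C_mul_add_derivative_of_natDegree_le (a : R) {v : R[X]} {n : ℕ}
    (hn : v.natDegree ≤ n) : (C a * v + derivative v).coeff n = a * v.coeff n := by
  rw [coeff_add, coeff_C_mul, coeff_derivative,
    coeff_eq_zero_of_natDegree_lt (Nat.lt_succ_of_le hn), zero_mul, add_zero]

lemma natDegree_list_sum_le_of_forall {l : List R[X]} {B : ℝ} (hB : 0 ≤ B)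
    (h : ∀ p ∈ l, (p.natDegree : ℝ) ≤ B) : (l.sum.natDegree : ℝ) ≤ B := by
  induction l with
  | nil => simpa using hB
  | cons p l ih =>
    rw [List.forall_mem_cons] at h
    rw [List.sum_cons]
    exact (Nat.cast_le.mpr (natDegree_add_le p l.sum)).trans <| by
      rw [Nat.cast_max]
      exact max_le h.1 (ih h.2)

lemma natDegree_list_prod_map_le {ι : Type*} (l : List ι) (f : ι → R[X]) (s : ι → ℕ)
    {K : ℝ} (h : ∀ i ∈ l, ((f i).natDegree : ℝ) ≤ K * s i) :
    ((l.map f).prod.natDegree : ℝ) ≤ K * ((l.map s).sum : ℕ) := by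
  induction l with
  | nil => simp
  | cons i l ih =>
    rw [List.forall_mem_cons] at h
    rw [List.map_cons, List.prod_cons, List.map_cons, List.sum_cons]
    calc (((f i) * (l.map f).prod).natDegree : ℝ)
        ≤ ((f i).natDegree : ℝ) + ((l.map f).prod.natDegree : ℝ) := by
          exact_mod_cast natDegree_mul_le
      _ ≤ K * s i + K * ((l.map s).sum : ℕ) := add_le_add h.1 (ih h.2)
      _ = K * ((s i + (l.map s).sum : ℕ) : ℝ) := by push_cast; ring

lemma natDegree_mul_list_prod_map_le {ι : Type*} (β : R[X]) (l : List ι) (f : ι → R[X])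
    (s : ι → ℕ) {K M : ℝ}
    (hβ : (β.natDegree : ℝ) ≤ K * (M - ((l.map s).sum : ℕ)))
    (h : ∀ i ∈ l, ((f i).natDegree : ℝ) ≤ K * s i) :
    ((β * (l.map f).prod).natDegree : ℝ) ≤ K * M :=
  calc ((β * (l.map f).prod).natDegree : ℝ)
      ≤ (β.natDegree : ℝ) + ((l.map f).prod.natDegree : ℝ) := by
        exact_mod_cast natDegree_mul_le
    _ ≤ K * (M - ((l.map s).sum : ℕ)) + K * ((l.map s).sum : ℕ) :=
        add_le_add hβ (natDegree_list_prod_map_le l f s h)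
    _ = K * M := by ring

end PolynomialDegree

section DeltaOp

variable {κ : ℕ} (lam : ℂ) (r : Fin κ → ℂ) (k : Fin κ → ℕ)

lemma natDegree_iterate_DeltaOp_le (j : ℕ) (v : ℂ[X]) :
    ((DeltaOp lam r k)^[j] v).natDegree ≤ v.natDegree := by
  induction j generalizing v with
  | zero => rfl
  | succ j ih => exact (ih _).trans (natDegree_C_mul_add_derivative_le _ v)

lemma coeff_iterate_DeltaOp_of_natDegree_le (j : ℕ) {v : ℂ[X]} {n : ℕ}
    (hn : v.natDegree ≤ n) :
    ((DeltaOp lam r k)^[j] v).coeff n = (lam + mdot r k) ^ j * v.coeff n := by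
  induction j generalizing v with
  | zero => simp
  | succ j ih =>
    have hΔ : (DeltaOp lam r k v).natDegree ≤ n :=
      (natDegree_C_mul_add_derivative_le _ v).trans hn
    rw [Function.iterate_succ_apply, ih hΔ, DeltaOp,
      coeff_C_mul_add_derivative_of_natDegree_le _ hn, pow_succ, mul_assoc]

lemma coeff_sum_smul_iterate_DeltaOp_of_natDegree_le (L : ℂ[X]) {v : ℂ[X]} {n : ℕ}
    (hn : v.natDegree ≤ n) :
    (∑ j ∈ Finset.range (L.natDegree + 1), L.coeff j • (DeltaOp lam r k)^[j] v).coeff n =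
      L.eval (lam + mdot r k) * v.coeff n := by
  simp only [finsetSum_coeff, coeff_smul, coeff_iterate_DeltaOp_of_natDegree_le lam r k _ hn,
    smul_eq_mul, ← mul_assoc, ← Finset.sum_mul, eval_eq_sum_range]

lemma natDegree_le_natDegree_sum_smul_iterate_DeltaOp {L : ℂ[X]}
    (hL : L.eval (lam + mdot r k) ≠ 0) (v : ℂ[X]) :
    v.natDegree ≤ (∑ j ∈ Finset.range (L.natDegree + 1),
      L.coeff j • (DeltaOp lam r k)^[j] v).natDegree := by
  rcases eq_or_ne v 0 with rfl | hv
  · simp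
  refine le_natDegree_of_ne_zero ?_
  rw [coeff_sum_smul_iterate_DeltaOp_of_natDegree_le lam r k L le_rfl]
  exact mul_ne_zero hL (leadingCoeff_ne_zero.mpr hv)

end DeltaOp

theorem degree_estimate_general (κ : ℕ) (lam : ℂ) (r : Fin κ → ℂ)
    (K : ℝ) (hK : 0 ≤ K) (L : Polynomial ℂ)
    (hL : ∀ k : Fin κ → ℕ, k ≠ 0 → L.eval (lam + mdot r k) ≠ 0)
    (c : (Fin κ → ℕ) → Polynomial ℂ)
    (hrec : ∀ m : Fin κ → ℕ, m ≠ 0 →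
      ∃ terms : List (Polynomial ℂ × List ((Fin κ → ℕ) × ℕ)),
        (∑ j ∈ Finset.range (L.natDegree + 1),
            L.coeff j • (DeltaOp lam r m)^[j] (c m)) =
          (terms.map fun t =>
            t.1 * (t.2.map fun kj => (DeltaOp lam r kj.1)^[kj.2] (c kj.1)).prod).sum ∧
        ∀ t ∈ terms,
          (∀ kj ∈ t.2, kj.1 ≠ (0 : Fin κ → ℕ)) ∧
          (t.2.map fun kj => kj.1).sum ≤ m ∧
          ((t.2.map fun kj => msize kj.1).sum < msize m) ∧
          ((t.1.natDegree : ℝ) ≤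
            K * ((msize m : ℝ) - ((t.2.map fun kj => msize kj.1).sum : ℝ)))) :
    ∀ m : Fin κ → ℕ, m ≠ 0 → ((c m).natDegree : ℝ) ≤ K * msize m := by
  intro m
  induction hN : msize m using Nat.strong_induction_on generalizing m with
  | _ N ih =>
    subst hN
    intro hm
    obtain ⟨terms, hLc, hterms⟩ := hrec m hm
    have hterm : ∀ t ∈ terms, ((t.1 * (t.2.map fun kj =>
        (DeltaOp lam r kj.1)^[kj.2] (c kj.1)).prod).natDegree : ℝ) ≤ K * (msize m : ℝ) := by
      intro t ht
      obtain ⟨hk0, -, hlt, hβ⟩ := hterms t ht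
      refine natDegree_mul_list_prod_map_le t.1 t.2 (fun kj => (DeltaOp lam r kj.1)^[kj.2] (c kj.1))
        (fun kj => msize kj.1) hβ fun kj hkj => ?_
      have hk : msize kj.1 < msize m :=
        (List.le_sum_of_mem (List.mem_map_of_mem (f := fun kj => msize kj.1) hkj)).trans_lt hlt
      exact (Nat.cast_le.mpr (natDegree_iterate_DeltaOp_le lam r kj.1 kj.2 _)).trans
        (ih _ hk kj.1 rfl (hk0 kj hkj))
    calc ((c m).natDegree : ℝ)
        ≤ (∑ j ∈ Finset.range (L.natDegree + 1),
            L.coeff j • (DeltaOp lam r m)^[j] (c m)).natDegree := by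
          exact_mod_cast natDegree_le_natDegree_sum_smul_iterate_DeltaOp lam r m (hL m hm) (c m)
      _ ≤ K * msize m := by
          rw [hLc]
          exact natDegree_list_sum_le_of_forall (by positivity) (List.forall_mem_map.mpr hterm)

/-- Lemma 4 (inductive degree estimate): if for every `m ≠ 0` the polynomial
`L(λ+⟨m,r⟩+d/dt) c_m` is a finite sum of terms `β(t)·Π_i Δ_{k_i}^{j_i} c_{k_i}` with
nonzero multi-indices `k_i`, `k_1+…+k_p ≤ m` componentwise, `|k_1|+…+|k_p| < |m|` and
`deg β ≤ K(|m|−Σ|k_i|)`, and `L(λ+⟨m,r⟩) ≠ 0` for all `m ≠ 0`, then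
`deg c_m ≤ K·|m|` for all `m ≠ 0`. -/
theorem degree_estimate (κ : ℕ) (hκ : 1 ≤ κ) (lam : ℂ) (r : Fin κ → ℂ)
    (K : ℝ) (hK : 0 ≤ K) (L : Polynomial ℂ)
    (hL : ∀ k : Fin κ → ℕ, k ≠ 0 → L.eval (lam + mdot r k) ≠ 0)
    (c : (Fin κ → ℕ) → Polynomial ℂ)
    (hrec : ∀ m : Fin κ → ℕ, m ≠ 0 →
      ∃ terms : List (Polynomial ℂ × List ((Fin κ → ℕ) × ℕ)),
        (∑ j ∈ Finset.range (L.natDegree + 1),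
            L.coeff j • (DeltaOp lam r m)^[j] (c m)) =
          (terms.map fun t =>
            t.1 * (t.2.map fun kj => (DeltaOp lam r kj.1)^[kj.2] (c kj.1)).prod).sum ∧
        ∀ t ∈ terms,
          (∀ kj ∈ t.2, kj.1 ≠ (0 : Fin κ → ℕ)) ∧
          (t.2.map fun kj => kj.1).sum ≤ m ∧
          ((t.2.map fun kj => msize kj.1).sum < msize m) ∧
          ((t.1.natDegree : ℝ) ≤
            K * ((msize m : ℝ) - ((t.2.map fun kj => msize kj.1).sum : ℝ)))) :
    ∀ m : Fin κ → ℕ, m ≠ 0 → ((c m).natDegree : ℝ) ≤ K * msize m :=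
  degree_estimate_general κ lam r K hK L hL c hrec
end

section
/- Fix κ ≥ 1, r = (r_1,…,r_κ) ∈ ℂ^κ with Re r_i > 0 for all i, real numbers s > 0 and 𝒦 ≥ 0, λ ∈ ℂ with Re λ > 0, and a complex polynomial L(ζ) = Σ_{j=0}^{ℓ} A_j ζ^j with A_ℓ ≠ 0 such that L(λ+⟨m,r⟩) ≠ 0 for every m ∈ ℤ₊^κ∖{0}, where ⟨m,r⟩ = m_1 r_1+…+m_κ r_κ and |m| = m_1+…+m_κ. Set θ = sup_{m ∈ ℤ₊^κ∖{0}} |m|/|λ+⟨m,r⟩| (finite since Re(λ+⟨m,r⟩) ≥ (min_i Re r_i)·|m|), and let R > max(1, 𝒦θ). For a complex polynomial C(t) = Σ_i a_i t^i set ‖C‖_R = Σ_i |a_i| R^i, and for j ∈ ℕ let H^j be the set of families η = (C_m)_{m ∈ ℤ₊^κ∖{0}} of polynomials with deg C_m ≤ 𝒦|m| and ‖η‖_j := Σ_m (|λ+⟨m,r⟩| + 𝒦|m|)^j / |Γ(⟨m,r⟩/s)| · ‖C_m‖_R < ∞. Then there exists α' > 0 such that for every family (b_m) ∈ H^0 there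 is a unique family (v_m) of complex polynomials with L(λ+⟨m,r⟩+d/dt) v_m = b_m for all m (the operator being Σ_j A_j (Δ_m)^j with Δ_m v = (λ+⟨m,r⟩)v + v'), this family satisfies deg v_m = deg b_m ≤ 𝒦|m|, belongs to H^ℓ, and ‖(v_m)‖_ℓ ≤ α'·‖(b_m)‖_0. -/
/-!
Fix `m ≠ 0` and put `μ = λ + ⟨m,r⟩`. Over `ℂ` the operator `L(μ + d/dt)` factors as
`A_ℓ ∏_ρ (d/dt - (ρ - μ))` over the roots `ρ` of `L`. Each factor is invertible on polynomials, its
inverse being a terminating Neumann series because `d/dt` is nilpotent, and on polynomials of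
degree `≤ N` one has `‖v'‖_R ≤ (N/R) ‖v‖_R`, hence `(|ρ - μ| - N/R) ‖v‖_R ≤ ‖v' - (ρ - μ) v‖_R`.
With `N = 𝒦|m| ≤ 𝒦θ|μ|` and `𝒦θ < R`, this yields `|μ|^ℓ ‖v‖_R ≲ ‖L(μ + d/dt) v‖_R` uniformly in `m`
once `|μ|` is large, while the finitely many `m` with `|μ|` small each have some finite constant.
As `|μ| + 𝒦|m| ≲ |μ|`, this bounds the `H^ℓ`-weight of `v_m` by the `H⁰`-weight of `b_m`, term by
term, so the Gamma factors play no role.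
-/

/-- The weighted `ℓ¹`-norm on complex polynomials. -/
noncomputable def normR (R : ℝ) (C : Polynomial ℂ) : ℝ :=
  ∑ i ∈ C.support, ‖C.coeff i‖ * R ^ i

/-- The Gamma-weighted norm `‖η‖_j`. -/
noncomputable def normJ {κ : ℕ} (r : Fin κ → ℂ) (s R 𝒦 : ℝ) (lam : ℂ) (j : ℕ)
    (η : (Fin κ → ℕ) → Polynomial ℂ) : ℝ :=
  ∑' m : {m : Fin κ → ℕ // m ≠ 0},
    (‖lam + mdot r m.1‖ + 𝒦 * msize m.1) ^ j /
      ‖Complex.Gamma (mdot r m.1 / (s : ℂ))‖ * normR R (η m.1)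

/-- Membership in the space `H^j`. -/
def memHJ {κ : ℕ} (r : Fin κ → ℂ) (s R 𝒦 : ℝ) (lam : ℂ) (j : ℕ)
    (η : (Fin κ → ℕ) → Polynomial ℂ) : Prop :=
  η 0 = 0 ∧ (∀ m : Fin κ → ℕ, ((η m).natDegree : ℝ) ≤ 𝒦 * msize m) ∧
  Summable (fun m : {m : Fin κ → ℕ // m ≠ 0} =>
    (‖lam + mdot r m.1‖ + 𝒦 * msize m.1) ^ j /
      ‖Complex.Gamma (mdot r m.1 / (s : ℂ))‖ * normR R (η m.1))

open Polynomial Finset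

section normR

variable {R : ℝ}

lemma normR_eq_sum_range {p : ℂ[X]} {n : ℕ} (hn : p.natDegree < n) :
    normR R p = ∑ i ∈ range n, ‖p.coeff i‖ * R ^ i :=
  sum_subset (fun i hi => mem_range.mpr ((le_natDegree_of_mem_supp i hi).trans_lt hn))
    (fun i _ hi => by simp [notMem_support_iff.mp hi])

lemma normR_nonneg (hR : 0 ≤ R) (p : ℂ[X]) : 0 ≤ normR R p :=
  sum_nonneg fun i _ => by positivity

lemma normR_add_le (hR : 0 ≤ R) (p q : ℂ[X]) : normR R (p + q) ≤ normR R p + normR R q := by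
  have hn {f : ℂ[X]} (hf : f.natDegree ≤ max (p + q).natDegree (max p.natDegree q.natDegree)) :
      f.natDegree < max (p + q).natDegree (max p.natDegree q.natDegree) + 1 := by omega
  rw [normR_eq_sum_range (hn le_sup_left), normR_eq_sum_range (hn (by simp)),
    normR_eq_sum_range (hn (by simp)), ← sum_add_distrib]
  gcongr with i
  rw [← add_mul, coeff_add]
  gcongr
  exact norm_add_le _ _

lemma normR_smul (a : ℂ) (p : ℂ[X]) : normR R (a • p) = ‖a‖ * normR R p := by
  rw [normR_eq_sum_range (Nat.lt_succ_of_le (natDegree_smul_le a p)),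
    normR_eq_sum_range (Nat.lt_succ_self _), mul_sum]
  simp only [coeff_smul, smul_eq_mul, norm_mul, mul_assoc]

lemma normR_neg (p : ℂ[X]) : normR R (-p) = normR R p := by
  simp [normR]

lemma normR_sub_le (hR : 0 ≤ R) (p q : ℂ[X]) : normR R (p - q) ≤ normR R p + normR R q := by
  simpa only [sub_eq_add_neg, normR_neg] using normR_add_le hR p (-q)

lemma normR_sum_le (hR : 0 ≤ R) {ι : Type*} (t : Finset ι) (f : ι → ℂ[X]) :
    normR R (∑ i ∈ t, f i) ≤ ∑ i ∈ t, normR R (f i) := by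
  classical
  induction t using Finset.induction_on with
  | empty => simp [normR]
  | insert i t hi ih =>
    rw [sum_insert hi, sum_insert hi]
    exact (normR_add_le hR _ _).trans (by gcongr)

lemma normR_derivative_le (hR : 0 < R) {p : ℂ[X]} {N : ℝ} (hp : (p.natDegree : ℝ) ≤ N) :
    normR R (derivative p) ≤ N / R * normR R p := by
  have hterm (i : ℕ) :
      ‖(derivative p).coeff i‖ * R ^ i ≤ N / R * (‖p.coeff (i + 1)‖ * R ^ (i + 1)) := by
    by_cases hi : p.coeff (i + 1) = 0
    · simp [coeff_derivative, hi]
    have hiN : ((i + 1 : ℕ) : ℝ) ≤ N := le_trans (by exact_mod_cast le_natDegree_of_ne_zero hi) hp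
    rw [coeff_derivative, norm_mul, show (i : ℂ) + 1 = ((i + 1 : ℕ) : ℂ) by push_cast; ring,
      Complex.norm_natCast, pow_succ]
    calc ‖p.coeff (i + 1)‖ * ((i + 1 : ℕ) : ℝ) * R ^ i ≤ ‖p.coeff (i + 1)‖ * N * R ^ i := by
          gcongr
      _ = N / R * (‖p.coeff (i + 1)‖ * (R ^ i * R)) := by field_simp
  calc normR R (derivative p)
      = ∑ i ∈ range (p.natDegree + 1), ‖(derivative p).coeff i‖ * R ^ i :=
        normR_eq_sum_range ((natDegree_derivative_le p).trans_lt (by omega))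
    _ ≤ ∑ i ∈ range (p.natDegree + 1), N / R * (‖p.coeff (i + 1)‖ * R ^ (i + 1)) :=
        sum_le_sum fun i _ => hterm i
    _ ≤ N / R * ∑ i ∈ range (p.natDegree + 2), ‖p.coeff i‖ * R ^ i := by
        rw [← mul_sum, sum_range_succ' _ (p.natDegree + 1)]
        have h0 : 0 ≤ N / R := div_nonneg ((Nat.cast_nonneg _).trans hp) hR.le
        gcongr
        exact le_add_of_nonneg_right (by positivity)
    _ = N / R * normR R p := by rw [normR_eq_sum_range (n := p.natDegree + 2) (by omega)]

lemma normR_iterate_derivative_le (hR : 0 < R) {p : ℂ[X]} {N : ℝ} (hp : (p.natDegree : ℝ) ≤ N)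
    (k : ℕ) : normR R (derivative^[k] p) ≤ (N / R) ^ k * normR R p := by
  induction k with
  | zero => simp
  | succ k ih =>
    have hk : ((derivative^[k] p).natDegree : ℝ) ≤ N :=
      le_trans (by exact_mod_cast (natDegree_iterate_derivative p k).trans (Nat.sub_le _ _)) hp
    have h0 : 0 ≤ N / R := div_nonneg ((Nat.cast_nonneg _).trans hp) hR.le
    rw [Function.iterate_succ_apply', pow_succ', mul_assoc]
    exact (normR_derivative_le hR hk).trans (by gcongr)

end normR

section firstOrder

variable {R : ℝ} {σ : ℂ}

lemma degree_derivative_sub_smul (hσ : σ ≠ 0) (w : ℂ[X]) :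
    (derivative w - σ • w).degree = w.degree := by
  rcases eq_or_ne w 0 with rfl | hw
  · simp
  have hσw : (σ • w).degree = w.degree := by rw [smul_eq_C_mul, degree_C_mul hσ]
  rw [degree_sub_eq_right_of_degree_lt (hσw ▸ degree_derivative_lt hw), hσw]

/-- Truncated Neumann series for `(D - σ)⁻¹`, exact on polynomials of degree `< n`. -/
noncomputable def derivativeSubSmulInv (σ : ℂ) (n : ℕ) : Module.End ℂ ℂ[X] :=
  -σ⁻¹ • ∑ i ∈ range n, (σ⁻¹ • derivative) ^ i

lemma pow_smul_derivative_apply (c : ℂ) (i : ℕ) (w : ℂ[X]) :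
    ((c • derivative : Module.End ℂ ℂ[X]) ^ i) w = c ^ i • derivative^[i] w := by
  rw [_root_.smul_pow, LinearMap.smul_apply, Module.End.pow_apply]

lemma derivative_sub_smul_eq (hσ : σ ≠ 0) (w : ℂ[X]) :
    derivative w - σ • w = -σ • ((1 - σ⁻¹ • derivative : Module.End ℂ ℂ[X]) w) := by
  rw [LinearMap.sub_apply, LinearMap.smul_apply, Module.End.one_apply, smul_sub, smul_smul,
    neg_mul, mul_inv_cancel₀ hσ]
  module

lemma derivativeSubSmulInv_apply_derivative_sub_smul (hσ : σ ≠ 0) {n : ℕ} {w : ℂ[X]}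
    (hw : w.natDegree < n) : derivativeSubSmulInv σ n (derivative w - σ • w) = w := by
  have h := congrArg (· w) (geom_sum_mul_neg (σ⁻¹ • derivative : Module.End ℂ ℂ[X]) n)
  rw [Module.End.mul_apply, LinearMap.sub_apply 1 (_ ^ n), Module.End.one_apply,
    pow_smul_derivative_apply, iterate_derivative_eq_zero hw, smul_zero, sub_zero] at h
  rw [derivativeSubSmulInv, derivative_sub_smul_eq hσ, LinearMap.smul_apply, map_smul, h,
    smul_smul, neg_mul_neg, inv_mul_cancel₀ hσ, one_smul]

lemma derivative_sub_smul_derivativeSubSmulInv_apply (hσ : σ ≠ 0) {n : ℕ} {b : ℂ[X]}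
    (hb : b.natDegree < n) :
    derivative (derivativeSubSmulInv σ n b) - σ • derivativeSubSmulInv σ n b = b := by
  have h := congrArg (· b) (mul_neg_geom_sum (σ⁻¹ • derivative : Module.End ℂ ℂ[X]) n)
  rw [Module.End.mul_apply, LinearMap.sub_apply 1 (_ ^ n), Module.End.one_apply,
    pow_smul_derivative_apply, iterate_derivative_eq_zero hb, smul_zero, sub_zero] at h
  rw [derivative_sub_smul_eq hσ, derivativeSubSmulInv, LinearMap.smul_apply, map_smul, h,
    smul_smul, neg_mul_neg, mul_inv_cancel₀ hσ, one_smul]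

lemma normR_derivativeSubSmulInv_apply_le (hR : 0 < R) (n : ℕ) {b : ℂ[X]} {N : ℝ}
    (hb : (b.natDegree : ℝ) ≤ N) :
    normR R (derivativeSubSmulInv σ n b) ≤
      ‖σ‖⁻¹ * (∑ i ∈ range n, (‖σ‖⁻¹ * (N / R)) ^ i) * normR R b := by
  rw [derivativeSubSmulInv, LinearMap.smul_apply, normR_smul, norm_neg, norm_inv, mul_assoc,
    sum_mul, LinearMap.sum_apply]
  gcongr
  refine (normR_sum_le hR.le _ _).trans (sum_le_sum fun i _ => ?_)
  rw [pow_smul_derivative_apply, normR_smul, norm_pow, norm_inv, mul_pow, mul_assoc]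
  gcongr
  exact normR_iterate_derivative_le hR hb i

lemma normR_le_of_derivative_sub_smul (hR : 0 < R) (hσ : σ ≠ 0) {K : ℕ} {w : ℂ[X]}
    (hw : w.natDegree ≤ K) :
    normR R w ≤ ‖σ‖⁻¹ * (∑ i ∈ range (K + 1), (‖σ‖⁻¹ * (K / R)) ^ i) *
      normR R (derivative w - σ • w) := by
  conv_lhs => rw [← derivativeSubSmulInv_apply_derivative_sub_smul hσ (Nat.lt_succ_of_le hw)]
  refine normR_derivativeSubSmulInv_apply_le hR _ ?_
  exact_mod_cast (natDegree_eq_of_degree_eq (degree_derivative_sub_smul hσ w)).le.trans hw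

lemma sub_mul_normR_le_normR_derivative_sub_smul (hR : 0 < R) {w : ℂ[X]} {N : ℝ}
    (hw : (w.natDegree : ℝ) ≤ N) :
    (‖σ‖ - N / R) * normR R w ≤ normR R (derivative w - σ • w) := by
  have h := normR_sub_le hR.le (derivative w) (derivative w - σ • w)
  rw [sub_sub_cancel, normR_smul] at h
  linarith [normR_derivative_le hR hw]

end firstOrder

/-- `aeval (shiftedDerivative μ) L` is the operator `L(μ + d/dt)`. -/
noncomputable def shiftedDerivative (μ : ℂ) : Module.End ℂ ℂ[X] :=
  derivative + algebraMap ℂ (Module.End ℂ ℂ[X]) μ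

section shiftedDerivative

variable {R : ℝ} {μ : ℂ}

lemma shiftedDerivative_apply (w : ℂ[X]) : shiftedDerivative μ w = derivative w + μ • w := rfl

lemma aeval_shiftedDerivative_X_sub_C_apply (ρ : ℂ) (w : ℂ[X]) :
    aeval (shiftedDerivative μ) (X - C ρ) w = derivative w - (ρ - μ) • w := by
  rw [map_sub, aeval_X, aeval_C, LinearMap.sub_apply, shiftedDerivative_apply,
    Module.algebraMap_end_apply, sub_smul]
  abel

lemma aeval_shiftedDerivative_cons_apply (ρ : ℂ) (s : Multiset ℂ) (w : ℂ[X]) :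
    aeval (shiftedDerivative μ) ((ρ ::ₘ s).map (X - C ·)).prod w =
      derivative (aeval (shiftedDerivative μ) (s.map (X - C ·)).prod w) -
        (ρ - μ) • aeval (shiftedDerivative μ) (s.map (X - C ·)).prod w := by
  rw [Multiset.map_cons, Multiset.prod_cons, map_mul, Module.End.mul_apply,
    aeval_shiftedDerivative_X_sub_C_apply]

lemma degree_aeval_shiftedDerivative_prod_apply {s : Multiset ℂ} (hμ : μ ∉ s) (w : ℂ[X]) :
    (aeval (shiftedDerivative μ) (s.map (X - C ·)).prod w).degree = w.degree := by
  induction s using Multiset.induction_on with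
  | empty => simp
  | cons ρ s ih =>
    have hρ : ρ - μ ≠ 0 := sub_ne_zero.mpr (ne_of_mem_of_not_mem (Multiset.mem_cons_self ρ s) hμ)
    rw [aeval_shiftedDerivative_cons_apply, degree_derivative_sub_smul hρ,
      ih fun h => hμ (Multiset.mem_cons_of_mem h)]

lemma exists_aeval_shiftedDerivative_prod_apply_eq {s : Multiset ℂ} (hμ : μ ∉ s) (b : ℂ[X]) :
    ∃ w, aeval (shiftedDerivative μ) (s.map (X - C ·)).prod w = b := by
  induction s using Multiset.induction_on generalizing b with
  | empty => exact ⟨b, by simp⟩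
  | cons ρ s ih =>
    have hρ : ρ - μ ≠ 0 := sub_ne_zero.mpr (ne_of_mem_of_not_mem (Multiset.mem_cons_self ρ s) hμ)
    obtain ⟨w, hw⟩ := ih (fun h => hμ (Multiset.mem_cons_of_mem h))
      (derivativeSubSmulInv (ρ - μ) (b.natDegree + 1) b)
    exact ⟨w, by rw [aeval_shiftedDerivative_cons_apply, hw,
      derivative_sub_smul_derivativeSubSmulInv_apply hρ (Nat.lt_succ_self _)]⟩

lemma normR_le_prod_mul_normR_aeval_shiftedDerivative_prod {s : Multiset ℂ} (hμ : μ ∉ s)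
    {K : ℕ} (c : ℂ → ℝ) (hc : ∀ ρ ∈ s, 0 ≤ c ρ ∧ ∀ w : ℂ[X], w.natDegree ≤ K →
      normR R w ≤ c ρ * normR R (derivative w - (ρ - μ) • w))
    {w : ℂ[X]} (hw : w.natDegree ≤ K) :
    normR R w ≤
      (s.map c).prod * normR R (aeval (shiftedDerivative μ) (s.map (X - C ·)).prod w) := by
  induction s using Multiset.induction_on with
  | empty => simp
  | cons ρ s ih =>
    have hμs : μ ∉ s := fun h => hμ (Multiset.mem_cons_of_mem h)
    obtain ⟨hc0, hcρ⟩ := hc ρ (Multiset.mem_cons_self _ _)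
    have hv := hcρ _ ((natDegree_eq_of_degree_eq
      (degree_aeval_shiftedDerivative_prod_apply hμs w)).le.trans hw)
    rw [Multiset.map_cons, Multiset.prod_cons, aeval_shiftedDerivative_cons_apply, mul_comm (c ρ),
      mul_assoc]
    exact (ih hμs fun ρ hρ => hc ρ (Multiset.mem_cons_of_mem hρ)).trans
      (mul_le_mul_of_nonneg_left hv (Multiset.prod_nonneg fun x hx => by
        obtain ⟨τ, hτ, rfl⟩ := Multiset.mem_map.mp hx
        exact (hc τ (Multiset.mem_cons_of_mem hτ)).1))

lemma aeval_shiftedDerivative_apply_eq_smul (p : ℂ[X]) (w : ℂ[X]) :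
    aeval (shiftedDerivative μ) p w =
      p.leadingCoeff • aeval (shiftedDerivative μ) (p.roots.map (X - C ·)).prod w := by
  conv_lhs => rw [(IsAlgClosed.splits p).eq_prod_roots]
  rw [map_mul, aeval_C, Module.End.mul_apply, Module.algebraMap_end_apply]

variable {p : ℂ[X]}

lemma notMem_roots_of_eval_ne_zero (hp : p.eval μ ≠ 0) : μ ∉ p.roots :=
  fun h => hp (mem_roots'.mp h).2

lemma leadingCoeff_ne_zero_of_eval_ne_zero (hp : p.eval μ ≠ 0) : p.leadingCoeff ≠ 0 :=
  leadingCoeff_ne_zero.mpr fun h => hp (by simp [h])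

lemma degree_aeval_shiftedDerivative_apply (hp : p.eval μ ≠ 0) (w : ℂ[X]) :
    (aeval (shiftedDerivative μ) p w).degree = w.degree := by
  rw [aeval_shiftedDerivative_apply_eq_smul, smul_eq_C_mul,
    degree_C_mul (leadingCoeff_ne_zero_of_eval_ne_zero hp),
    degree_aeval_shiftedDerivative_prod_apply (notMem_roots_of_eval_ne_zero hp)]

lemma bijective_aeval_shiftedDerivative (hp : p.eval μ ≠ 0) :
    Function.Bijective (aeval (shiftedDerivative μ) p) := by
  refine ⟨(injective_iff_map_eq_zero _).mpr fun w hw => ?_, fun b => ?_⟩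
  · simpa [hw] using (degree_aeval_shiftedDerivative_apply hp w).symm
  · obtain ⟨w, hw⟩ := exists_aeval_shiftedDerivative_prod_apply_eq
      (notMem_roots_of_eval_ne_zero hp) (p.leadingCoeff⁻¹ • b)
    refine ⟨w, ?_⟩
    rw [aeval_shiftedDerivative_apply_eq_smul, hw, smul_smul,
      mul_inv_cancel₀ (leadingCoeff_ne_zero_of_eval_ne_zero hp), one_smul]

lemma norm_leadingCoeff_mul_normR_le (hp : p.eval μ ≠ 0) {K : ℕ} (c : ℂ → ℝ)
    (hc : ∀ ρ ∈ p.roots, 0 ≤ c ρ ∧ ∀ w : ℂ[X], w.natDegree ≤ K →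
      normR R w ≤ c ρ * normR R (derivative w - (ρ - μ) • w))
    {w : ℂ[X]} (hw : w.natDegree ≤ K) :
    ‖p.leadingCoeff‖ * normR R w ≤
      (p.roots.map c).prod * normR R (aeval (shiftedDerivative μ) p w) := by
  rw [aeval_shiftedDerivative_apply_eq_smul, normR_smul, mul_left_comm]
  exact mul_le_mul_of_nonneg_left (normR_le_prod_mul_normR_aeval_shiftedDerivative_prod
    (notMem_roots_of_eval_ne_zero hp) c hc hw) (norm_nonneg _)

end shiftedDerivative

section estimates

variable {R : ℝ}

lemma exists_normR_le_mul_normR_aeval_shiftedDerivative (hR : 0 < R) {p : ℂ[X]} {μ : ℂ}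
    (hp : p.eval μ ≠ 0) (K : ℕ) : ∃ C, ∀ w : ℂ[X], w.natDegree ≤ K →
      normR R w ≤ C * normR R (aeval (shiftedDerivative μ) p w) := by
  have hlc : 0 < ‖p.leadingCoeff‖ := norm_pos_iff.mpr (leadingCoeff_ne_zero_of_eval_ne_zero hp)
  set c : ℂ → ℝ := fun ρ =>
    ‖ρ - μ‖⁻¹ * (∑ i ∈ range (K + 1), (‖ρ - μ‖⁻¹ * (K / R)) ^ i)
  have hKR : 0 ≤ (K : ℝ) / R := div_nonneg K.cast_nonneg hR.le
  refine ⟨‖p.leadingCoeff‖⁻¹ * (p.roots.map c).prod, fun w hw => ?_⟩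
  rw [mul_assoc, le_inv_mul_iff₀ hlc]
  refine norm_leadingCoeff_mul_normR_le hp c (fun ρ hρ => ⟨mul_nonneg (by positivity)
    (sum_nonneg fun i _ => pow_nonneg (mul_nonneg (by positivity) hKR) i), fun v hv => ?_⟩) hw
  exact normR_le_of_derivative_sub_smul hR
    (sub_ne_zero.mpr (ne_of_mem_of_not_mem hρ (notMem_roots_of_eval_ne_zero hp))) hv

/-- For `|μ|` large, every root `ρ` of `p` satisfies `|ρ - μ| - N/R ≥ δ |μ|` with
`δ = (1 - t/R)/2`, so each first-order factor is inverted with norm `≤ (δ |μ|)⁻¹`. -/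
lemma exists_pow_mul_normR_le_of_le_norm (hR : 0 < R) {t : ℝ} (htR : t < R) (p : ℂ[X]) :
    ∃ μ₀ α : ℝ, ∀ μ : ℂ, μ₀ ≤ ‖μ‖ → p.eval μ ≠ 0 → ∀ N : ℝ, N ≤ t * ‖μ‖ →
      ∀ w : ℂ[X], (w.natDegree : ℝ) ≤ N →
        (‖μ‖ + N) ^ p.natDegree * normR R w ≤ α * normR R (aeval (shiftedDerivative μ) p w) := by
  set B := (p.roots.map (‖·‖)).sum
  set δ := (1 - t / R) / 2
  have hδ : 0 < δ := by have := (div_lt_one hR).mpr htR; simp only [δ]; linarith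
  refine ⟨B / δ + 1, ((1 + t) / δ) ^ p.natDegree * ‖p.leadingCoeff‖⁻¹,
    fun μ hμ hp N hN w hw => ?_⟩
  have hnorm : ∀ x ∈ p.roots.map (‖·‖), (0 : ℝ) ≤ x := fun x hx => by
    obtain ⟨τ, _, rfl⟩ := Multiset.mem_map.mp hx
    exact norm_nonneg τ
  have hB0 : 0 ≤ B := Multiset.sum_nonneg hnorm
  have hμ0 : 0 < ‖μ‖ := lt_of_lt_of_le (by positivity) hμ
  have hN0 : 0 ≤ N := (Nat.cast_nonneg _).trans hw
  have ht : 0 ≤ 1 + t := by nlinarith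
  have hB : B ≤ δ * ‖μ‖ := by
    have := (div_le_iff₀ hδ).mp (le_sub_iff_add_le.mpr hμ); nlinarith
  have hgap (ρ : ℂ) (hρ : ρ ∈ p.roots) : δ * ‖μ‖ ≤ ‖ρ - μ‖ - N / R := by
    have hρB : ‖ρ‖ ≤ B := Multiset.single_le_sum hnorm _ (Multiset.mem_map_of_mem _ hρ)
    have hNR : N / R ≤ t / R * ‖μ‖ := by rw [div_mul_eq_mul_div]; gcongr
    have := norm_sub_norm_le μ ρ
    rw [norm_sub_rev] at this
    simp only [δ] at hB ⊢
    linarith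
  have hlc : 0 < ‖p.leadingCoeff‖ := norm_pos_iff.mpr (leadingCoeff_ne_zero_of_eval_ne_zero hp)
  have hlower : ‖p.leadingCoeff‖ * normR R w ≤
      ((δ * ‖μ‖) ^ p.natDegree)⁻¹ * normR R (aeval (shiftedDerivative μ) p w) := by
    have h := norm_leadingCoeff_mul_normR_le hp (K := w.natDegree) (fun _ => (δ * ‖μ‖)⁻¹)
      (fun ρ hρ => ⟨by positivity, fun v hv => by
        rw [le_inv_mul_iff₀ (by positivity)]
        refine (mul_le_mul_of_nonneg_right (hgap ρ hρ) (normR_nonneg hR.le v)).trans ?_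
        exact sub_mul_normR_le_normR_derivative_sub_smul hR
          (le_trans (by exact_mod_cast hv) hw)⟩) le_rfl
    rwa [Multiset.map_const', Multiset.prod_replicate, IsAlgClosed.card_roots_eq_natDegree,
      inv_pow] at h
  rw [le_inv_mul_iff₀ (by positivity)] at hlower
  calc (‖μ‖ + N) ^ p.natDegree * normR R w
      ≤ ((1 + t) * ‖μ‖) ^ p.natDegree * normR R w := by
        gcongr
        · exact normR_nonneg hR.le w
        · linarith
    _ = ((1 + t) / δ) ^ p.natDegree * ‖p.leadingCoeff‖⁻¹ *
          ((δ * ‖μ‖) ^ p.natDegree * (‖p.leadingCoeff‖ * normR R w)) := by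
        rw [div_pow, mul_pow, mul_pow]
        field_simp
    _ ≤ _ := by gcongr

end estimates

theorem exists_forall_pow_mul_normR_le {ι : Type*} {R t : ℝ} (hR : 0 < R) (htR : t < R)
    {p : ℂ[X]} (μ : ι → ℂ) (N : ι → ℝ) (hN : ∀ i, N i ≤ t * ‖μ i‖)
    (hp : ∀ i, p.eval (μ i) ≠ 0) (hfin : ∀ c, {i | ‖μ i‖ < c}.Finite) :
    ∃ α > 0, ∀ i (w : ℂ[X]), (w.natDegree : ℝ) ≤ N i →
      (‖μ i‖ + N i) ^ p.natDegree * normR R w ≤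
        α * normR R (aeval (shiftedDerivative (μ i)) p w) := by
  obtain ⟨μ₀, α₁, hlarge⟩ := exists_pow_mul_normR_le_of_le_norm hR htR p
  have hsmall (i : ι) : ∃ C, ∀ w : ℂ[X], (w.natDegree : ℝ) ≤ N i →
      (‖μ i‖ + N i) ^ p.natDegree * normR R w ≤
        C * normR R (aeval (shiftedDerivative (μ i)) p w) := by
    obtain ⟨C, hC⟩ := exists_normR_le_mul_normR_aeval_shiftedDerivative hR (hp i) ⌊N i⌋₊
    refine ⟨(‖μ i‖ + N i) ^ p.natDegree * C, fun w hw => ?_⟩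
    have hN0 : 0 ≤ N i := (Nat.cast_nonneg _).trans hw
    rw [mul_assoc]
    exact mul_le_mul_of_nonneg_left (hC w (Nat.le_floor hw)) (by positivity)
  choose C hC using hsmall
  obtain ⟨c, hc⟩ := ((hfin μ₀).image C).bddAbove
  refine ⟨max 1 (max α₁ c), by positivity, fun i w hw => ?_⟩
  have hT := normR_nonneg hR.le (aeval (shiftedDerivative (μ i)) p w)
  by_cases hi : μ₀ ≤ ‖μ i‖
  · refine (hlarge _ hi (hp i) _ (hN i) w hw).trans (mul_le_mul_of_nonneg_right ?_ hT)
    exact (le_max_left _ _).trans (le_max_right _ _)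
  · refine (hC i w hw).trans (mul_le_mul_of_nonneg_right ?_ hT)
    exact (hc ⟨i, not_le.mp hi, rfl⟩).trans ((le_max_right _ _).trans (le_max_right _ _))

lemma existsUnique_pi_of_bijective {ι α β : Type*} [Zero α] (i₀ : ι) {T : ι → α → β}
    (hT : ∀ i, i ≠ i₀ → Function.Bijective (T i)) (b : ι → β) :
    ∃! v : ι → α, v i₀ = 0 ∧ ∀ i, i ≠ i₀ → T i (v i) = b i := by
  classical
  choose g hg using fun i (hi : i ≠ i₀) => (hT i hi).2 (b i)
  refine ⟨fun i => if hi : i = i₀ then 0 else g i hi,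
    ⟨by simp, fun i hi => by simp [hi, hg]⟩, fun v ⟨hv0, hv⟩ => funext fun i => ?_⟩
  by_cases hi : i = i₀
  · simp [hi, hv0]
  · simpa [hi] using (hT i hi).1 ((hv i hi).trans (hg i hi).symm)

noncomputable def symbolPoly (ℓ : ℕ) (A : ℕ → ℂ) : ℂ[X] :=
  ∑ j ∈ range (ℓ + 1), C (A j) * X ^ j

section symbolPoly

variable {ℓ : ℕ} {A : ℕ → ℂ}

lemma eval_symbolPoly (z : ℂ) : (symbolPoly ℓ A).eval z = ∑ j ∈ range (ℓ + 1), A j * z ^ j := by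
  simp [symbolPoly, eval_finsetSum]

lemma natDegree_symbolPoly (hA : A ℓ ≠ 0) : (symbolPoly ℓ A).natDegree = ℓ :=
  natDegree_eq_of_le_of_coeff_ne_zero (natDegree_sum_le_of_forall_le _ _ fun j hj =>
    (natDegree_C_mul_X_pow_le _ _).trans (mem_range_succ_iff.mp hj))
    (by simp [symbolPoly, hA])

lemma aeval_symbolPoly_apply (f : Module.End ℂ ℂ[X]) (w : ℂ[X]) :
    aeval f (symbolPoly ℓ A) w = ∑ j ∈ range (ℓ + 1), A j • f^[j] w := by
  simp [symbolPoly, LinearMap.sum_apply, Module.End.pow_apply, Module.algebraMap_end_apply]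

end symbolPoly

lemma coe_deltaOp {κ : ℕ} (lam : ℂ) (r : Fin κ → ℂ) (k : Fin κ → ℕ) :
    DeltaOp lam r k = shiftedDerivative (lam + mdot r k) := by
  funext v
  rw [DeltaOp, shiftedDerivative_apply, smul_eq_C_mul, add_comm]

lemma finite_setOf_msize_le (κ n : ℕ) : {m : Fin κ → ℕ | msize m ≤ n}.Finite :=
  (Set.Finite.pi fun _ => Set.finite_Iic n).subset fun m hm i _ =>
    (single_le_sum (fun j _ => Nat.zero_le (m j)) (mem_univ i)).trans hm

lemma finite_setOf_lt_of_msize_le {κ : ℕ} {θ : ℝ} {f : (Fin κ → ℕ) → ℝ} (hf : ∀ m, 0 ≤ f m)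
    (hθ : ∀ m, m ≠ 0 → (msize m : ℝ) ≤ θ * f m) (c : ℝ) :
    {m : {m : Fin κ → ℕ // m ≠ 0} | f m.1 < c}.Finite := by
  refine ((finite_setOf_msize_le κ ⌊|θ| * c⌋₊).preimage Subtype.val_injective.injOn).subset
    fun m hm => Nat.le_floor ?_
  calc (msize m.1 : ℝ) ≤ θ * f m.1 := hθ m.1 m.2
    _ ≤ |θ| * f m.1 := mul_le_mul_of_nonneg_right (le_abs_self θ) (hf m.1)
    _ ≤ |θ| * c := mul_le_mul_of_nonneg_left (le_of_lt hm) (abs_nonneg θ)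

lemma summable_and_normJ_le_of_le {κ : ℕ} {r : Fin κ → ℂ} {s R 𝒦 : ℝ} {lam : ℂ} {j : ℕ}
    {α : ℝ} {b v : (Fin κ → ℕ) → ℂ[X]} (hR : 0 ≤ R) (h𝒦 : 0 ≤ 𝒦)
    (hb : memHJ r s R 𝒦 lam 0 b)
    (hvb : ∀ m, m ≠ 0 →
      (‖lam + mdot r m‖ + 𝒦 * msize m) ^ j * normR R (v m) ≤ α * normR R (b m)) :
    Summable (fun m : {m : Fin κ → ℕ // m ≠ 0} =>
      (‖lam + mdot r m.1‖ + 𝒦 * msize m.1) ^ j /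
        ‖Complex.Gamma (mdot r m.1 / (s : ℂ))‖ * normR R (v m.1)) ∧
    normJ r s R 𝒦 lam j v ≤ α * normJ r s R 𝒦 lam 0 b := by
  have hle (m : {m : Fin κ → ℕ // m ≠ 0}) :
      (‖lam + mdot r m.1‖ + 𝒦 * msize m.1) ^ j /
          ‖Complex.Gamma (mdot r m.1 / (s : ℂ))‖ * normR R (v m.1) ≤
        α * ((‖lam + mdot r m.1‖ + 𝒦 * msize m.1) ^ 0 /
          ‖Complex.Gamma (mdot r m.1 / (s : ℂ))‖ * normR R (b m.1)) := by
    rw [pow_zero, div_mul_eq_mul_div, div_mul_eq_mul_div, mul_div_assoc']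
    exact div_le_div_of_nonneg_right (by simpa [mul_comm] using hvb m.1 m.2) (norm_nonneg _)
  have hsum := Summable.of_nonneg_of_le (fun m => by have := normR_nonneg hR (v m.1); positivity)
    hle (hb.2.2.mul_left α)
  exact ⟨hsum, (hsum.tsum_le_tsum hle (hb.2.2.mul_left α)).trans_eq tsum_mul_left⟩

theorem diagonal_operator_invertible_general (κ : ℕ) (r : Fin κ → ℂ)
    (s 𝒦 : ℝ) (h𝒦 : 0 ≤ 𝒦)
    (lam : ℂ)
    (ℓ : ℕ) (A : ℕ → ℂ) (hA : A ℓ ≠ 0)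
    (hL : ∀ m : Fin κ → ℕ, m ≠ 0 →
      ∑ j ∈ Finset.range (ℓ + 1), A j * (lam + mdot r m) ^ j ≠ 0)
    (θ : ℝ) (hθ : ∀ m : Fin κ → ℕ, m ≠ 0 →
      (msize m : ℝ) ≤ θ * ‖lam + mdot r m‖)
    (R : ℝ) (hR : max 1 (𝒦 * θ) < R) :
    ∃ α' > (0 : ℝ), ∀ b : (Fin κ → ℕ) → Polynomial ℂ, memHJ r s R 𝒦 lam 0 b →
      (∃! v : (Fin κ → ℕ) → Polynomial ℂ, v 0 = 0 ∧ ∀ m : Fin κ → ℕ, m ≠ 0 →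
        (∑ j ∈ Finset.range (ℓ + 1), A j • (DeltaOp lam r m)^[j] (v m)) = b m) ∧
      ∀ v : (Fin κ → ℕ) → Polynomial ℂ,
        (v 0 = 0 ∧ ∀ m : Fin κ → ℕ, m ≠ 0 →
          (∑ j ∈ Finset.range (ℓ + 1), A j • (DeltaOp lam r m)^[j] (v m)) = b m) →
        (∀ m : Fin κ → ℕ, m ≠ 0 → (v m).degree = (b m).degree) ∧
        memHJ r s R 𝒦 lam ℓ v ∧
        normJ r s R 𝒦 lam ℓ v ≤ α' * normJ r s R 𝒦 lam 0 b := by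
  have hR0 : 0 < R := (lt_max_of_lt_left one_pos).trans hR
  have hT (m : Fin κ → ℕ) (w : ℂ[X]) :
      ∑ j ∈ range (ℓ + 1), A j • (DeltaOp lam r m)^[j] w =
        aeval (shiftedDerivative (lam + mdot r m)) (symbolPoly ℓ A) w := by
    rw [aeval_symbolPoly_apply, coe_deltaOp]
  have hLμ (m : Fin κ → ℕ) (hm : m ≠ 0) : (symbolPoly ℓ A).eval (lam + mdot r m) ≠ 0 := by
    rw [eval_symbolPoly]
    exact hL m hm
  obtain ⟨α, hα, hbound⟩ := exists_forall_pow_mul_normR_le hR0 ((le_max_right _ _).trans_lt hR)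
    (fun m : {m : Fin κ → ℕ // m ≠ 0} => lam + mdot r m.1) (fun m => 𝒦 * msize m.1)
    (fun m => by rw [mul_assoc]; exact mul_le_mul_of_nonneg_left (hθ m.1 m.2) h𝒦)
    (fun m => hLμ m.1 m.2) (finite_setOf_lt_of_msize_le (fun _ => norm_nonneg _) hθ)
  refine ⟨α, hα, fun b hb => ⟨?_, fun v ⟨hv0, hv⟩ => ?_⟩⟩
  · simp only [hT]
    exact existsUnique_pi_of_bijective 0
      (fun m hm => bijective_aeval_shiftedDerivative (hLμ m hm)) b
  have hdeg (m : Fin κ → ℕ) (hm : m ≠ 0) : (v m).degree = (b m).degree := by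
    rw [← hv m hm, hT, degree_aeval_shiftedDerivative_apply (hLμ m hm)]
  have hnat (m : Fin κ → ℕ) : ((v m).natDegree : ℝ) ≤ 𝒦 * msize m := by
    rcases eq_or_ne m 0 with rfl | hm
    · simpa [hv0, hb.1] using hb.2.1 0
    · rw [natDegree_eq_of_degree_eq (hdeg m hm)]
      exact hb.2.1 m
  obtain ⟨hsum, hnorm⟩ := summable_and_normJ_le_of_le hR0.le h𝒦 hb fun m hm => by
    simpa only [natDegree_symbolPoly hA, ← hT, hv m hm] using hbound ⟨m, hm⟩ (v m) (hnat m)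
  exact ⟨hdeg, ⟨hv0, hnat, hsum⟩, hnorm⟩

/-- The diagonal operator `L(λ+δ̂)`, acting coefficientwise by `L(λ+⟨m,r⟩+d/dt)`,
is a linear homeomorphism from `H^ℓ` onto `H⁰`: for every `(b_m) ∈ H⁰` there is a unique
family of polynomial solutions `(v_m)` (vanishing at `m = 0`), it satisfies
`deg v_m = deg b_m ≤ 𝒦|m|`, lies in `H^ℓ`, and `‖(v_m)‖_ℓ ≤ α'·‖(b_m)‖_0`. -/
theorem diagonal_operator_invertible (κ : ℕ) (hκ : 1 ≤ κ) (r : Fin κ → ℂ)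
    (hr : ∀ i, 0 < (r i).re) (s 𝒦 : ℝ) (hs : 0 < s) (h𝒦 : 0 ≤ 𝒦)
    (lam : ℂ) (hlam : 0 < lam.re)
    (ℓ : ℕ) (A : ℕ → ℂ) (hA : A ℓ ≠ 0)
    (hL : ∀ m : Fin κ → ℕ, m ≠ 0 →
      ∑ j ∈ Finset.range (ℓ + 1), A j * (lam + mdot r m) ^ j ≠ 0)
    (θ : ℝ) (hθ : ∀ m : Fin κ → ℕ, m ≠ 0 →
      (msize m : ℝ) ≤ θ * ‖lam + mdot r m‖)
    (R : ℝ) (hR : max 1 (𝒦 * θ) < R) :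
    ∃ α' > (0 : ℝ), ∀ b : (Fin κ → ℕ) → Polynomial ℂ, memHJ r s R 𝒦 lam 0 b →
      (∃! v : (Fin κ → ℕ) → Polynomial ℂ, v 0 = 0 ∧ ∀ m : Fin κ → ℕ, m ≠ 0 →
        (∑ j ∈ Finset.range (ℓ + 1), A j • (DeltaOp lam r m)^[j] (v m)) = b m) ∧
      ∀ v : (Fin κ → ℕ) → Polynomial ℂ,
        (v 0 = 0 ∧ ∀ m : Fin κ → ℕ, m ≠ 0 →
          (∑ j ∈ Finset.range (ℓ + 1), A j • (DeltaOp lam r m)^[j] (v m)) = b m) →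
        (∀ m : Fin κ → ℕ, m ≠ 0 → (v m).degree = (b m).degree) ∧
        memHJ r s R 𝒦 lam ℓ v ∧
        normJ r s R 𝒦 lam ℓ v ≤ α' * normJ r s R 𝒦 lam 0 b :=
  diagonal_operator_invertible_general κ r s 𝒦 h𝒦 lam ℓ A hA hL θ hθ R hR
end
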